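/- arXiv:2501.04536 — 8 statements merged into one kernel-verified Lean document; each statement's English description precedes it below -/
import Mathlib

section
/- Let f : ℝⁿ → ℝ be convex and differentiable with ∇f Lipschitz continuous on ℝⁿ with constant L ∈ (0,∞), and suppose every level set {x ∈ ℝⁿ : f(x) ≤ c} is bounded. Let f_* = inf{f(x) : x ∈ ℝⁿ}. Let {x_k} ⊂ ℝⁿ be a sequence with f(x_{k+1}) ≤ f(x_k) for every k ≥ 0, let g_k = ∇f(x_k), and let {S_k} be a sequence of linear subspaces of ℝⁿ. Then f(x_k) → f_* as k → ∞ if and only if both dist(g_k, S_k) → 0 and f(x_{k+1}) − inf{f(x) : x ∈ x_k + S_k} → 0 as k → ∞, where dist(g, S) denotes the Euclidean distance from g to the subspace S. -/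
/-!
Since the level sets are bounded, `f` attains its minimum at some `z` and the iterates stay in a
bounded set. A gradient step of length `1/L` along a direction `d` with `⟪∇f a, d⟫ = ‖d‖²` lowers
`f` by at least `‖d‖²/(2L)` (descent lemma). Taking `d = ∇f(xₖ)` shows that `f(xₖ) → f(z)` forces
`∇f(xₖ) → 0`; taking `d` the projection `pₖ` of `∇f(xₖ)` onto `Sₖ` shows that `‖pₖ‖²/(2L)` is at
most `f(xₖ) - inf_{xₖ + Sₖ} f`. Conversely, `‖∇f(xₖ)‖ ≤ dist(∇f(xₖ), Sₖ) + ‖pₖ‖`, and by convexity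
`f(xₖ) - f(z) ≤ ⟪∇f(xₖ), xₖ - z⟫`, which tends to `0` with the gradient on a bounded sequence.
-/

open Filter Topology Set RealInnerProductSpace
open scoped Gradient

theorem tendsto_zero_of_sq_le {ι : Type*} {l : Filter ι} {u v : ι → ℝ}
    (huv : ∀ i, u i ^ 2 ≤ v i) (hv : Tendsto v l (𝓝 0)) : Tendsto u l (𝓝 0) := by
  rw [tendsto_zero_iff_abs_tendsto_zero]
  exact squeeze_zero (fun i => abs_nonneg _) (fun i => Real.abs_le_sqrt (huv i))
    (by simpa using hv.sqrt)

section InnerProductSpace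

variable {F : Type*} [NormedAddCommGroup F] [InnerProductSpace ℝ F]

theorem Submodule.norm_sub_starProjection_eq_infDist (K : Submodule ℝ F)
    [K.HasOrthogonalProjection] (v : F) : ‖v - K.starProjection v‖ = Metric.infDist v K := by
  rw [K.starProjection_minimal, Metric.infDist_eq_iInf]
  simp [dist_eq_norm]

theorem Submodule.real_inner_starProjection_eq_norm_sq (K : Submodule ℝ F)
    [K.HasOrthogonalProjection] (v : F) : ⟪v, K.starProjection v⟫ = ‖K.starProjection v‖ ^ 2 := by
  simpa [real_inner_comm] using K.re_inner_starProjection_eq_normSq v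

theorem Submodule.norm_le_infDist_add_norm_starProjection (K : Submodule ℝ F)
    [K.HasOrthogonalProjection] (v : F) : ‖v‖ ≤ Metric.infDist v K + ‖K.starProjection v‖ :=
  (norm_le_insert' v (K.starProjection v)).trans_eq
    (by rw [K.norm_sub_starProjection_eq_infDist, add_comm])

theorem csInf_image_coset_le {f : F → ℝ} (hf : BddBelow (range f)) {K : Submodule ℝ F} {a s : F}
    (hs : s ∈ K) : sInf (f '' {y | ∃ s ∈ K, y = a + s}) ≤ f (a + s) :=
  csInf_le (hf.mono (image_subset_range _ _)) (mem_image_of_mem f ⟨s, hs, rfl⟩)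

theorem le_csInf_image_coset {f : F → ℝ} {m : ℝ} (hm : ∀ y, m ≤ f y) (K : Submodule ℝ F) (a : F) :
    m ≤ sInf (f '' {y | ∃ s ∈ K, y = a + s}) :=
  le_csInf (Set.Nonempty.image f ⟨a, 0, K.zero_mem, (add_zero a).symm⟩)
    (forall_mem_image.2 fun y _ => hm y)

variable [CompleteSpace F] {f : F → ℝ}

theorem HasGradientAt.hasDerivAt_add_smul {g a v : F} {t : ℝ}
    (h : HasGradientAt f g (a + t • v)) : HasDerivAt (fun s : ℝ => f (a + s • v)) ⟪g, v⟫ t := by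
  have := (hasGradientAt_iff_hasFDerivAt.1 h).comp_hasDerivAt t
    (((hasDerivAt_id t).smul_const v).const_add a)
  rw [InnerProductSpace.toDual_apply_apply, one_smul] at this
  exact this

theorem ConvexOn.add_inner_sub_le_of_hasGradientAt {s : Set F} (hf : ConvexOn ℝ s f) {g a b : F}
    (ha : a ∈ s) (hb : b ∈ s) (h : HasGradientAt f g a) : f a + ⟪g, b - a⟫ ≤ f b := by
  have hd : HasDerivAt (f ∘ AffineMap.lineMap (k := ℝ) a b) ⟪g, b - a⟫ 0 := by
    have := (hasGradientAt_iff_hasFDerivAt.1 h).comp_hasDerivAt_of_eq 0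
      (AffineMap.hasDerivAt_lineMap (a := a) (b := b)) (by simp)
    rwa [InnerProductSpace.toDual_apply_apply] at this
  have := (hf.comp_affineMap (AffineMap.lineMap a b)).le_slope_of_hasDerivAt
    (by simpa using ha) (by simpa using hb) one_pos hd
  simp only [slope_def_field, Function.comp_apply, AffineMap.lineMap_apply_one,
    AffineMap.lineMap_apply_zero, sub_zero, div_one] at this
  linarith

theorem add_inner_gradient_add_le_of_lipschitz {L : ℝ} (hdiff : Differentiable ℝ f)
    (hlip : ∀ y z, ‖∇ f y - ∇ f z‖ ≤ L * ‖y - z‖) (a v : F) :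
    f (a + v) ≤ f a + ⟪∇ f a, v⟫ + L / 2 * ‖v‖ ^ 2 := by
  set φ : ℝ → ℝ := fun t => f (a + t • v) - t * ⟪∇ f a, v⟫ - L / 2 * t ^ 2 * ‖v‖ ^ 2
  have hφ' : ∀ t, HasDerivAt φ (⟪∇ f (a + t • v) - ∇ f a, v⟫ - L * t * ‖v‖ ^ 2) t := by
    intro t
    have h1 := (hdiff (a + t • v)).hasGradientAt.hasDerivAt_add_smul
    have h2 := (hasDerivAt_id t).mul_const ⟪∇ f a, v⟫
    have h3 := ((hasDerivAt_pow 2 t).const_mul (L / 2)).mul_const (‖v‖ ^ 2)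
    refine ((h1.sub h2).sub h3).congr_deriv ?_
    rw [inner_sub_left]
    ring
  have hφ'_nonpos : ∀ t, 0 ≤ t → ⟪∇ f (a + t • v) - ∇ f a, v⟫ - L * t * ‖v‖ ^ 2 ≤ 0 := by
    intro t ht
    have := calc
      ⟪∇ f (a + t • v) - ∇ f a, v⟫ ≤ ‖∇ f (a + t • v) - ∇ f a‖ * ‖v‖ := real_inner_le_norm _ _
      _ ≤ L * ‖t • v‖ * ‖v‖ := by gcongr; simpa using hlip (a + t • v) a
      _ = L * t * ‖v‖ ^ 2 := by rw [norm_smul, Real.norm_of_nonneg ht]; ring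
    linarith
  have hanti : AntitoneOn φ (Ici 0) :=
    antitoneOn_of_hasDerivWithinAt_nonpos (convex_Ici 0)
      (fun t _ => (hφ' t).continuousAt.continuousWithinAt)
      (fun t _ => (hφ' t).hasDerivWithinAt)
      (fun t ht => hφ'_nonpos t (interior_subset ht))
  have := hanti (mem_Ici.2 le_rfl) (mem_Ici.2 zero_le_one) zero_le_one
  simp only [φ, one_smul, zero_smul, add_zero, one_mul, zero_mul, one_pow, sub_zero] at this
  linarith

theorem sq_norm_le_of_inner_gradient_eq {L m : ℝ} (hL : 0 < L) (hdiff : Differentiable ℝ f)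
    (hlip : ∀ y z, ‖∇ f y - ∇ f z‖ ≤ L * ‖y - z‖) {a d : F} (hd : ⟪∇ f a, d⟫ = ‖d‖ ^ 2)
    (hm : m ≤ f (a - L⁻¹ • d)) : ‖d‖ ^ 2 ≤ 2 * L * (f a - m) := by
  have hdescent := add_inner_gradient_add_le_of_lipschitz hdiff hlip a (-(L⁻¹ • d))
  rw [← sub_eq_add_neg, inner_neg_right, inner_smul_right, hd, norm_neg, norm_smul,
    Real.norm_of_nonneg (inv_nonneg.2 hL.le)] at hdescent
  have hdecrease : f (a - L⁻¹ • d) ≤ f a - ‖d‖ ^ 2 / (2 * L) := by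
    convert hdescent using 1
    field_simp
    ring
  rw [← div_le_iff₀' (by positivity)]
  linarith

theorem sq_norm_starProjection_gradient_le (K : Submodule ℝ F) [K.HasOrthogonalProjection]
    {L : ℝ} (hL : 0 < L) (hdiff : Differentiable ℝ f)
    (hlip : ∀ y z, ‖∇ f y - ∇ f z‖ ≤ L * ‖y - z‖) (hf : BddBelow (range f)) (a : F) :
    ‖K.starProjection (∇ f a)‖ ^ 2 ≤ 2 * L * (f a - sInf (f '' {y | ∃ s ∈ K, y = a + s})) := by
  have hmem : -(L⁻¹ • K.starProjection (∇ f a)) ∈ K :=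
    K.neg_mem (K.smul_mem _ (K.starProjection_apply_mem _))
  refine sq_norm_le_of_inner_gradient_eq hL hdiff hlip (K.real_inner_starProjection_eq_norm_sq _) ?_
  simpa [sub_eq_add_neg] using csInf_image_coset_le hf hmem

theorem ConvexOn.tendsto_of_tendsto_norm_gradient {ι : Type*} {l : Filter ι}
    (hconv : ConvexOn ℝ univ f) (hdiff : Differentiable ℝ f) {z : F} (hz : ∀ y, f z ≤ f y)
    {x : ι → F} (hx : Bornology.IsBounded (range x))
    (hg : Tendsto (fun k => ‖∇ f (x k)‖) l (𝓝 0)) : Tendsto (fun k => f (x k)) l (𝓝 (f z)) := by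
  obtain ⟨C, hC⟩ := isBounded_iff_forall_norm_le.1 hx
  have hbound : ∀ k, f (x k) - f z ≤ ‖∇ f (x k)‖ * (C + ‖z‖) := fun k => calc
    f (x k) - f z ≤ ⟪∇ f (x k), x k - z⟫ := by
      have := hconv.add_inner_sub_le_of_hasGradientAt (mem_univ _) (mem_univ z)
        (hdiff (x k)).hasGradientAt
      rw [← neg_sub, inner_neg_right] at this
      linarith
    _ ≤ ‖∇ f (x k)‖ * ‖x k - z‖ := real_inner_le_norm _ _
    _ ≤ ‖∇ f (x k)‖ * (C + ‖z‖) := by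
      gcongr
      exact (norm_sub_le _ _).trans (by gcongr; exact hC _ (mem_range_self k))
  have := squeeze_zero (fun k => sub_nonneg.2 (hz (x k))) hbound (by simpa using hg.mul_const _)
  simpa using this.add_const (f z)

end InnerProductSpace

/-- **Proposition 2.1.** For a convex, differentiable `f` with Lipschitz-continuous gradient
and bounded level sets, a monotone sequence `x k` with subspaces `S k` satisfies
`f (x k) → inf f` iff `dist (∇f (x k), S k) → 0` and
`f (x (k+1)) - inf {f y : y ∈ x k + S k} → 0`. -/
theorem optimist_convergence_characterization {n : ℕ}
    (f : EuclideanSpace ℝ (Fin n) → ℝ)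
    (hconv : ConvexOn ℝ Set.univ f)
    (hdiff : Differentiable ℝ f)
    (L : ℝ) (hL : 0 < L)
    (hlip : ∀ y z, ‖gradient f y - gradient f z‖ ≤ L * ‖y - z‖)
    (hlevel : ∀ c : ℝ, Bornology.IsBounded {y | f y ≤ c})
    (x : ℕ → EuclideanSpace ℝ (Fin n))
    (hmono : ∀ k, f (x (k + 1)) ≤ f (x k))
    (S : ℕ → Submodule ℝ (EuclideanSpace ℝ (Fin n))) :
    Tendsto (fun k => f (x k)) atTop (𝓝 (⨅ y, f y)) ↔
      (Tendsto (fun k => Metric.infDist (gradient f (x k)) (S k : Set (EuclideanSpace ℝ (Fin n))))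
          atTop (𝓝 0) ∧
        Tendsto (fun k => f (x (k + 1)) - sInf (f '' {y | ∃ s ∈ S k, y = x k + s}))
          atTop (𝓝 0)) := by
  obtain ⟨z, hz⟩ := hdiff.continuous.exists_forall_le_of_isBounded 0 (hlevel (f 0))
  have hbdd : BddBelow (range f) := ⟨f z, forall_mem_range.2 hz⟩
  rw [le_antisymm (ciInf_le hbdd z) (le_ciInf hz)]
  have hanti : Antitone (fun k => f (x k)) := antitone_nat_of_succ_le hmono
  have hstep : Tendsto (fun k => f (x (k + 1)) - f (x k)) atTop (𝓝 0) := by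
    have hlim := tendsto_atTop_ciInf hanti ⟨f z, forall_mem_range.2 fun k => hz (x k)⟩
    simpa using (hlim.comp (tendsto_add_atTop_nat 1)).sub hlim
  constructor
  · intro hf
    have hg : Tendsto (fun k => ‖gradient f (x k)‖) atTop (𝓝 0) :=
      tendsto_zero_of_sq_le
        (fun k => sq_norm_le_of_inner_gradient_eq hL hdiff hlip (real_inner_self_eq_norm_sq _) (hz _))
        (by simpa using (hf.sub_const (f z)).const_mul (2 * L))
    refine ⟨squeeze_zero (fun k => Metric.infDist_nonneg) (fun k => ?_) hg, ?_⟩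
    · simpa using Metric.infDist_le_dist_of_mem (S k).zero_mem (x := gradient f (x k))
    · refine tendsto_of_tendsto_of_tendsto_of_le_of_le hstep
        (by simpa using (hf.comp (tendsto_add_atTop_nat 1)).sub_const (f z))
        (fun k => sub_le_sub_left (by simpa using csInf_image_coset_le hbdd (S k).zero_mem) _)
        (fun k => sub_le_sub_left (le_csInf_image_coset hz (S k) (x k)) _)
  · rintro ⟨hdist, hgap⟩
    have hproj : Tendsto (fun k => ‖(S k).starProjection (gradient f (x k))‖) atTop (𝓝 0) :=
      tendsto_zero_of_sq_le (fun k => sq_norm_starProjection_gradient_le (S k) hL hdiff hlip hbdd _)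
        (by simpa using (hgap.sub hstep).const_mul (2 * L))
    have hg : Tendsto (fun k => ‖gradient f (x k)‖) atTop (𝓝 0) :=
      squeeze_zero (fun k => norm_nonneg _)
        (fun k => (S k).norm_le_infDist_add_norm_starProjection _) (by simpa using hdist.add hproj)
    exact hconv.tendsto_of_tendsto_norm_gradient hdiff hz
      ((hlevel (f (x 0))).subset (range_subset_iff.2 fun k => hanti (Nat.zero_le k))) hg
end

section
/- Let f : ℝⁿ → ℝ be differentiable with ∇f Lipschitz continuous on ℝⁿ with constant L ∈ (0,∞) and f bounded below. Let {x_k} ⊂ ℝⁿ be a sequence with f(x_{k+1}) ≤ f(x_k) for every k ≥ 0, let g_k = ∇f(x_k), and let {S_k} be a sequence of linear subspaces of ℝⁿ. Suppose there is an infinite subset 𝒦 ⊆ ℕ such that dist(g_k, S_k) → 0 and f(x_{k+1}) − inf{f(x) : x ∈ x_k + S_k} → 0 as k → ∞ with k restricted to 𝒦. Then liminf_{k→∞} ‖g_k‖ = 0. -/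
/-!
Minimising `f` over `x + S` does at least as well as the step `-L⁻¹ • P (∇f x)` inside `S`
(`P` the orthogonal projection onto `S`), which by the descent lemma lowers `f` by
`‖P (∇f x)‖² / (2L)`. With Pythagoras this gives
`‖∇f x‖² ≤ 2L (f x - inf_{x + S} f) + dist(∇f x, S)²`.
Along `K` both terms tend to zero: `f (x k) - f (x (k+1)) → 0` because `f (x k)` is monotone and
bounded below. Hence `‖∇f (x k)‖ → 0` along the infinite set `K`, and the liminf vanishes.
-/

open Filter Topology
open scoped RealInnerProductSpace

namespace Submodule

variable {E : Type*} [NormedAddCommGroup E] [InnerProductSpace ℝ E]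
  (K : Submodule ℝ E) [K.HasOrthogonalProjection]

theorem infDist_eq_norm_sub_starProjection (v : E) :
    Metric.infDist v K = ‖v - K.starProjection v‖ := by
  rw [starProjection_minimal, Metric.infDist_eq_iInf]
  simp only [dist_eq_norm]
  rfl

theorem norm_sq_eq_norm_starProjection_sq_add_infDist_sq (v : E) :
    ‖v‖ ^ 2 = ‖K.starProjection v‖ ^ 2 + Metric.infDist v K ^ 2 := by
  have horth : ⟪K.starProjection v, v - K.starProjection v⟫ = 0 := by
    rw [real_inner_comm]
    exact K.starProjection_inner_eq_zero v _ (K.starProjection_apply_mem v)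
  conv_lhs => rw [← add_sub_cancel (K.starProjection v) v]
  rw [infDist_eq_norm_sub_starProjection, norm_add_sq_real, horth, mul_zero, add_zero]

theorem real_inner_starProjection_self (v : E) :
    ⟪v, K.starProjection v⟫ = ‖K.starProjection v‖ ^ 2 := by
  have horth := K.starProjection_inner_eq_zero v _ (K.starProjection_apply_mem v)
  rwa [inner_sub_left, real_inner_self_eq_norm_sq, sub_eq_zero] at horth

end Submodule

section GradientLipschitz

variable {E : Type*} [NormedAddCommGroup E] [InnerProductSpace ℝ E] [CompleteSpace E]
  {f : E → ℝ} {L : ℝ}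

theorem Differentiable.hasDerivAt_comp_add_smul (hf : Differentiable ℝ f) (x v : E) (t : ℝ) :
    HasDerivAt (fun t : ℝ => f (x + t • v)) ⟪gradient f (x + t • v), v⟫ t := by
  have hline : HasDerivAt (fun t : ℝ => x + t • v) v t := by
    simpa using ((hasDerivAt_id t).smul_const v).const_add x
  rw [inner_gradient_left]
  exact (hf _).hasFDerivAt.comp_hasDerivAt t hline

theorem le_add_inner_gradient_add_of_lipschitz (hf : Differentiable ℝ f)
    (hlip : ∀ y z, ‖gradient f y - gradient f z‖ ≤ L * ‖y - z‖) (x v : E) :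
    f (x + v) ≤ f x + ⟪gradient f x, v⟫ + L / 2 * ‖v‖ ^ 2 := by
  set φ : ℝ → ℝ := fun t =>
    f (x + t • v) - t * ⟪gradient f x, v⟫ - L / 2 * t ^ 2 * ‖v‖ ^ 2
  have hφ (t : ℝ) : HasDerivAt φ
      (⟪gradient f (x + t • v) - gradient f x, v⟫ - L * t * ‖v‖ ^ 2) t := by
    have := ((hf.hasDerivAt_comp_add_smul x v t).sub
      ((hasDerivAt_id t).mul_const ⟪gradient f x, v⟫)).sub
      (((hasDerivAt_pow 2 t).const_mul (L / 2)).mul_const (‖v‖ ^ 2))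
    refine this.congr_deriv ?_
    rw [inner_sub_left]
    ring
  have hφ_deriv_le (t : ℝ) (ht : 0 ≤ t) :
      ⟪gradient f (x + t • v) - gradient f x, v⟫ ≤ L * t * ‖v‖ ^ 2 := by
    have hgrad : ‖gradient f (x + t • v) - gradient f x‖ ≤ L * t * ‖v‖ := by
      simpa [norm_smul, abs_of_nonneg ht, mul_assoc] using hlip (x + t • v) x
    calc ⟪gradient f (x + t • v) - gradient f x, v⟫
        ≤ ‖gradient f (x + t • v) - gradient f x‖ * ‖v‖ := real_inner_le_norm _ _
      _ ≤ L * t * ‖v‖ * ‖v‖ := by gcongr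
      _ = L * t * ‖v‖ ^ 2 := by ring
  have hanti : AntitoneOn φ (Set.Ici 0) := by
    refine antitoneOn_of_deriv_nonpos (convex_Ici 0)
      (fun t _ => (hφ t).continuousAt.continuousWithinAt)
      (fun t _ => (hφ t).differentiableAt.differentiableWithinAt) fun t ht => ?_
    rw [interior_Ici] at ht
    rw [(hφ t).deriv, sub_nonpos]
    exact hφ_deriv_le t ht.le
  have hφ_one_le := hanti Set.self_mem_Ici (Set.mem_Ici.2 zero_le_one) zero_le_one
  simp only [φ, zero_smul, one_smul, add_zero] at hφ_one_le
  linarith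

theorem norm_starProjection_gradient_sq_le_of_lipschitz (hf : Differentiable ℝ f) (hL : 0 < L)
    (hlip : ∀ y z, ‖gradient f y - gradient f z‖ ≤ L * ‖y - z‖)
    (K : Submodule ℝ E) [K.HasOrthogonalProjection] {x : E}
    (hbdd : BddBelow (f '' {y | ∃ s ∈ K, y = x + s})) :
    ‖K.starProjection (gradient f x)‖ ^ 2 ≤
      2 * L * (f x - sInf (f '' {y | ∃ s ∈ K, y = x + s})) := by
  set p := K.starProjection (gradient f x)
  have hstep : sInf (f '' {y | ∃ s ∈ K, y = x + s}) ≤ f (x + (-L⁻¹) • p) :=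
    csInf_le hbdd ⟨_, ⟨_, K.smul_mem _ (K.starProjection_apply_mem _), rfl⟩, rfl⟩
  have hdesc := le_add_inner_gradient_add_of_lipschitz hf hlip x ((-L⁻¹) • p)
  rw [real_inner_smul_right, K.real_inner_starProjection_self, norm_smul, Real.norm_eq_abs,
    abs_neg, abs_of_pos (inv_pos.2 hL)] at hdesc
  have hdecr : f (x + (-L⁻¹) • p) ≤ f x - ‖p‖ ^ 2 / (2 * L) :=
    hdesc.trans_eq (by field_simp; ring)
  calc ‖p‖ ^ 2 = 2 * L * (‖p‖ ^ 2 / (2 * L)) := by field_simp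
    _ ≤ 2 * L * (f x - sInf (f '' {y | ∃ s ∈ K, y = x + s})) := by gcongr; linarith

theorem norm_gradient_sq_le_of_lipschitz (hf : Differentiable ℝ f) (hL : 0 < L)
    (hlip : ∀ y z, ‖gradient f y - gradient f z‖ ≤ L * ‖y - z‖)
    (K : Submodule ℝ E) [K.HasOrthogonalProjection] {x : E}
    (hbdd : BddBelow (f '' {y | ∃ s ∈ K, y = x + s})) :
    ‖gradient f x‖ ^ 2 ≤ 2 * L * (f x - sInf (f '' {y | ∃ s ∈ K, y = x + s})) +
      Metric.infDist (gradient f x) K ^ 2 := by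
  rw [K.norm_sq_eq_norm_starProjection_sq_add_infDist_sq]
  gcongr
  exact norm_starProjection_gradient_sq_le_of_lipschitz hf hL hlip K hbdd

end GradientLipschitz

theorem Antitone.tendsto_sub_succ_zero {u : ℕ → ℝ} (hu : Antitone u)
    (hbdd : BddBelow (Set.range u)) : Tendsto (fun k => u k - u (k + 1)) atTop (𝓝 0) := by
  have hlim := tendsto_atTop_ciInf hu hbdd
  simpa using hlim.sub (hlim.comp (tendsto_add_atTop_nat 1))

theorem Filter.liminf_eq_of_tendsto_of_le {α : Type*} {l l' : Filter α} [l'.NeBot] (hl : l' ≤ l)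
    {u : α → ℝ} {a : ℝ} (hle : ∀ᶠ k in l, a ≤ u k) (hu : Tendsto u l' (𝓝 a)) :
    liminf u l = a := by
  have hbdd : IsBoundedUnder (· ≥ ·) l u := isBoundedUnder_of_eventually_ge hle
  have hcobdd' : IsCoboundedUnder (· ≥ ·) l' u := hu.isBoundedUnder_le.isCoboundedUnder_ge
  refine le_antisymm ?_ (le_liminf_of_le (hcobdd'.mono (map_mono hl)) hle)
  calc liminf u l ≤ liminf u l' := liminf_le_liminf_of_le hl hbdd hcobdd'
    _ = a := hu.liminf_eq
/-- Remark after Proposition 2.1: if condition (2.2) holds only along an infinite subset `K` of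
the iterations, then `liminf ‖∇f (x k)‖ = 0`. -/
theorem optimist_gradient_liminf_zero {n : ℕ}
    (f : EuclideanSpace ℝ (Fin n) → ℝ)
    (hdiff : Differentiable ℝ f)
    (L : ℝ) (hL : 0 < L)
    (hlip : ∀ y z, ‖gradient f y - gradient f z‖ ≤ L * ‖y - z‖)
    (hbdd : BddBelow (Set.range f))
    (x : ℕ → EuclideanSpace ℝ (Fin n))
    (hmono : ∀ k, f (x (k + 1)) ≤ f (x k))
    (S : ℕ → Submodule ℝ (EuclideanSpace ℝ (Fin n)))
    (K : Set ℕ) (hK : K.Infinite)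
    (hdist : Tendsto (fun k => Metric.infDist (gradient f (x k))
        (S k : Set (EuclideanSpace ℝ (Fin n)))) (atTop ⊓ 𝓟 K) (𝓝 0))
    (hsub : Tendsto (fun k => f (x (k + 1)) - sInf (f '' {y | ∃ s ∈ S k, y = x k + s}))
        (atTop ⊓ 𝓟 K) (𝓝 0)) :
    Filter.liminf (fun k => ‖gradient f (x k)‖) atTop = 0 := by
  have hdecrease : Tendsto (fun k => f (x k) - sInf (f '' {y | ∃ s ∈ S k, y = x k + s}))
      (atTop ⊓ 𝓟 K) (𝓝 0) := by
    have hstep := (antitone_nat_of_succ_le hmono).tendsto_sub_succ_zero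
      (hbdd.mono (Set.range_comp_subset_range x f))
    simpa using (hstep.mono_left inf_le_left).add hsub
  have hbound (k : ℕ) : ‖gradient f (x k)‖ ≤
      √(2 * L * (f (x k) - sInf (f '' {y | ∃ s ∈ S k, y = x k + s})) +
        Metric.infDist (gradient f (x k)) (S k) ^ 2) :=
    Real.le_sqrt_of_sq_le <| norm_gradient_sq_le_of_lipschitz hdiff hL hlip (S k)
      (hbdd.mono (Set.image_subset_range _ _))
  have hgrad : Tendsto (fun k => ‖gradient f (x k)‖) (atTop ⊓ 𝓟 K) (𝓝 0) :=
    squeeze_zero (fun k => norm_nonneg _) hbound <| by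
      simpa using ((hdecrease.const_mul (2 * L)).add (hdist.pow 2)).sqrt
  have hK_neBot : (atTop ⊓ 𝓟 K).NeBot :=
    Nat.cofinite_eq_atTop ▸ hK.cofinite_inf_principal_neBot
  exact liminf_eq_of_tendsto_of_le inf_le_left (.of_forall fun k => norm_nonneg _) hgrad
end

section
/- Let f : ℝⁿ → ℝ be convex and differentiable, and suppose the level set {x ∈ ℝⁿ : f(x) ≤ f(x₀)} is bounded, where x₀ ∈ ℝⁿ. Let f_* = inf{f(x) : x ∈ ℝⁿ}. Let {x_k} ⊂ ℝⁿ be a sequence starting at x₀ with f(x_{k+1}) ≤ f(x_k) for every k ≥ 0 and ‖∇f(x_k)‖ → 0 as k → ∞. Then f(x_k) → f_* as k → ∞. -/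
open Filter Topology Set

/-! The iterates stay in the sublevel set through `x₀`, which is compact, so it contains a global
minimizer `z` and lies within some distance `C` of it. The supporting hyperplane inequality of
convexity at `x k` then gives `f z ≤ f (x k) ≤ f z + ‖∇f (x k)‖ * C`, and the right side tends
to `f z`. -/

section
variable {E : Type*} [NormedAddCommGroup E] [NormedSpace ℝ E] {f : E → ℝ} {f' : E →L[ℝ] ℝ}
  {a : E}

theorem ConvexOn.add_apply_sub_le_of_hasFDerivAt (hf : ConvexOn ℝ univ f)
    (hd : HasFDerivAt f f' a) (z : E) : f a + f' (z - a) ≤ f z := by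
  have hline : ConvexOn ℝ univ (f ∘ AffineMap.lineMap (k := ℝ) a z) := by
    simpa using hf.comp_affineMap (AffineMap.lineMap a z)
  have hd0 : HasFDerivAt f f' (AffineMap.lineMap a z (0 : ℝ)) := by
    rwa [AffineMap.lineMap_apply_zero]
  have hderiv : HasDerivAt (f ∘ AffineMap.lineMap (k := ℝ) a z) (f' (z - a)) 0 :=
    hd0.comp_hasDerivAt 0 AffineMap.hasDerivAt_lineMap
  have := hline.le_slope_of_hasDerivAt (mem_univ 0) (mem_univ 1) one_pos hderiv
  simp only [slope_def_field, Function.comp_apply, AffineMap.lineMap_apply_one,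
    AffineMap.lineMap_apply_zero, sub_zero, div_one] at this
  linarith [map_sub f' z a]

theorem ConvexOn.sub_le_opNorm_mul_dist_of_hasFDerivAt (hf : ConvexOn ℝ univ f)
    (hd : HasFDerivAt f f' a) (z : E) : f a - f z ≤ ‖f'‖ * dist a z := by
  have hsupport := hf.add_apply_sub_le_of_hasFDerivAt hd z
  have hlin : -f' (z - a) ≤ ‖f'‖ * dist a z := by
    rw [← map_neg, neg_sub, dist_eq_norm]
    exact (le_abs_self _).trans (f'.le_opNorm _)
  linarith

theorem ConvexOn.tendsto_of_tendsto_norm_fderiv {ι : Type*} {l : Filter ι} {x : ι → E} {z : E}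
    (hf : ConvexOn ℝ univ f) (hdiff : Differentiable ℝ f) (hz : ∀ y, f z ≤ f y)
    (hx : Bornology.IsBounded (range x))
    (hgrad : Tendsto (fun k => ‖fderiv ℝ f (x k)‖) l (𝓝 0)) :
    Tendsto (fun k => f (x k)) l (𝓝 (f z)) := by
  obtain ⟨C, hC⟩ := (Metric.isBounded_iff_subset_closedBall z).mp hx
  have hupper : ∀ k, f (x k) ≤ f z + ‖fderiv ℝ f (x k)‖ * C := fun k => by
    have hdist : dist (x k) z ≤ C := hC ⟨k, rfl⟩
    have hsub := hf.sub_le_opNorm_mul_dist_of_hasFDerivAt (hdiff (x k)).hasFDerivAt z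
    have hscale := mul_le_mul_of_nonneg_left hdist (norm_nonneg (fderiv ℝ f (x k)))
    linarith
  have hlim : Tendsto (fun k => f z + ‖fderiv ℝ f (x k)‖ * C) l (𝓝 (f z)) := by
    simpa using (hgrad.mul_const C).const_add (f z)
  exact tendsto_of_tendsto_of_tendsto_of_le_of_le tendsto_const_nhds hlim (fun k => hz (x k))
    hupper
end

theorem norm_gradient_eq_norm_fderiv {F : Type*} [NormedAddCommGroup F] [InnerProductSpace ℝ F]
    [CompleteSpace F] (f : F → ℝ) (x : F) : ‖gradient f x‖ = ‖fderiv ℝ f x‖ :=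
  (InnerProductSpace.toDual ℝ F).symm.norm_map _

/-- For a convex differentiable `f` whose level set through the starting point is bounded,
a monotone sequence with vanishing gradients minimizes `f`. -/
theorem convex_vanishing_gradient_minimizes {n : ℕ}
    (f : EuclideanSpace ℝ (Fin n) → ℝ)
    (hconv : ConvexOn ℝ Set.univ f)
    (hdiff : Differentiable ℝ f)
    (x₀ : EuclideanSpace ℝ (Fin n))
    (hlevel : Bornology.IsBounded {y | f y ≤ f x₀})
    (x : ℕ → EuclideanSpace ℝ (Fin n))
    (hx0 : x 0 = x₀)
    (hmono : ∀ k, f (x (k + 1)) ≤ f (x k))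
    (hgrad : Tendsto (fun k => ‖gradient f (x k)‖) atTop (𝓝 0)) :
    Tendsto (fun k => f (x k)) atTop (𝓝 (⨅ y, f y)) := by
  obtain ⟨z, hz⟩ := hdiff.continuous.exists_forall_le_of_isBounded x₀ hlevel
  have hrange : Bornology.IsBounded (range x) := hlevel.subset <| by
    rintro _ ⟨k, rfl⟩
    exact hx0 ▸ antitone_nat_of_succ_le (f := f ∘ x) hmono (Nat.zero_le k)
  rw [ciInf_eq_of_forall_ge_of_forall_gt_exists_lt hz fun w hw => ⟨z, hw⟩]
  simp only [norm_gradient_eq_norm_fderiv] at hgrad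
  exact hconv.tendsto_of_tendsto_norm_fderiv hdiff hz hrange hgrad
end

section
/- Let f : ℝⁿ → ℝ be differentiable with ∇f Lipschitz continuous on ℝⁿ with constant L ∈ (0,∞). Let η > 0 and ζ > 0, and set μ = 2/(L + 2η + 4ζ). Let x ∈ ℝⁿ, g = ∇f(x), and let ĝ ∈ ℝⁿ and δ > 0 satisfy ‖ĝ − g‖ ≤ ζδ and δ ≤ μ‖g‖. Then ĝ ≠ 0, ‖ĝ‖ ≥ ηδ, and f(x − δ ĝ/‖ĝ‖) ≤ f(x) − η δ². -/
/-!
From `δ ≤ μ ‖∇f x‖` and `‖ĝ - ∇f x‖ ≤ ζ δ` one gets `‖ĝ‖ ≥ (L/2 + η + ζ) δ`. Along the step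
`s = (δ / ‖ĝ‖) ĝ` of length `δ`, the descent lemma `f (x - s) ≤ f x - ⟪∇f x, s⟫ + L δ² / 2` and the
bound `⟪∇f x, s⟫ ≥ δ ‖ĝ‖ - ζ δ²` then leave a decrease of at least `η δ²`.
-/

open RealInnerProductSpace

section

variable {E : Type*} [NormedAddCommGroup E] [InnerProductSpace ℝ E]

theorem norm_sub_norm_sub_le_inner_div_norm (a b : E) : ‖a‖ - ‖a - b‖ ≤ ⟪b, a⟫ / ‖a‖ := by
  rcases eq_or_ne a 0 with rfl | ha
  · simp
  rw [le_div_iff₀ (norm_pos_iff.mpr ha)]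
  have hba : ⟪b, a⟫ = ‖a‖ ^ 2 - ⟪a - b, a⟫ := by
    rw [inner_sub_left, real_inner_self_eq_norm_sq]; ring
  nlinarith [real_inner_le_norm (a - b) a]

variable [CompleteSpace E] {f : E → ℝ}

theorem hasDerivAt_comp_add_smul_of_differentiable (hf : Differentiable ℝ f) (x v : E) (t : ℝ) :
    HasDerivAt (fun s : ℝ => f (x + s • v)) ⟪gradient f (x + t • v), v⟫ t := by
  have hline : HasDerivAt (fun s : ℝ => x + s • v) v t := by
    simpa using ((hasDerivAt_id t).smul_const v).const_add x
  exact (hf _).hasGradientAt.hasFDerivAt.comp_hasDerivAt t hline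

/-- The descent lemma. The Lipschitz bound makes `t ↦ f (x + t v) - t ⟪∇f x, v⟫ - L t² ‖v‖² / 2`
antitone on `[0, 1]`, so no integration is needed. -/
theorem le_add_inner_gradient_add_of_gradient_lipschitz (hf : Differentiable ℝ f) {L : ℝ}
    (hlip : ∀ y z, ‖gradient f y - gradient f z‖ ≤ L * ‖y - z‖) (x v : E) :
    f (x + v) ≤ f x + ⟪gradient f x, v⟫ + L / 2 * ‖v‖ ^ 2 := by
  set φ : ℝ → ℝ := fun t => f (x + t • v) - t * ⟪gradient f x, v⟫ - L / 2 * t ^ 2 * ‖v‖ ^ 2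
  have hφ : ∀ t, HasDerivAt φ
      (⟪gradient f (x + t • v) - gradient f x, v⟫ - L * t * ‖v‖ ^ 2) t := by
    intro t
    have := ((hasDerivAt_comp_add_smul_of_differentiable hf x v t).sub
      ((hasDerivAt_id t).mul_const ⟪gradient f x, v⟫)).sub
      (((hasDerivAt_pow 2 t).const_mul (L / 2)).mul_const (‖v‖ ^ 2))
    refine this.congr_deriv ?_
    simp only [inner_sub_left, Nat.cast_ofNat]
    ring
  have hφ_nonpos : ∀ t ∈ interior (Set.Icc (0 : ℝ) 1),
      ⟪gradient f (x + t • v) - gradient f x, v⟫ - L * t * ‖v‖ ^ 2 ≤ 0 := by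
    intro t ht
    rw [interior_Icc] at ht
    have hdist : ‖x + t • v - x‖ = t * ‖v‖ := by
      rw [add_sub_cancel_left, norm_smul, Real.norm_of_nonneg ht.1.le]
    rw [sub_nonpos]
    calc ⟪gradient f (x + t • v) - gradient f x, v⟫
        ≤ ‖gradient f (x + t • v) - gradient f x‖ * ‖v‖ := real_inner_le_norm _ _
      _ ≤ L * (t * ‖v‖) * ‖v‖ := by
          gcongr
          exact hdist ▸ hlip _ _
      _ = L * t * ‖v‖ ^ 2 := by ring
  have hanti : AntitoneOn φ (Set.Icc 0 1) :=
    antitoneOn_of_hasDerivWithinAt_nonpos (convex_Icc 0 1)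
      (fun t _ => (hφ t).continuousAt.continuousWithinAt)
      (fun t _ => (hφ t).hasDerivWithinAt) hφ_nonpos
  have h01 := hanti (by simp) (by simp) zero_le_one
  simp only [φ, zero_smul, add_zero, one_smul, zero_mul, one_mul, one_pow, sub_zero,
    ne_eq, OfNat.ofNat_ne_zero, not_false_eq_true, zero_pow, mul_zero] at h01
  linarith

end

/-- Implication (3.4): if `δ ≤ μ ‖∇f x‖` with `μ = 2/(L + 2η + 4ζ)` and the approximate gradient
`ghat` satisfies `‖ghat - ∇f x‖ ≤ ζ δ`, then `ghat ≠ 0`, `‖ghat‖ ≥ η δ`, and the normalized step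
of length `δ` along `-ghat` decreases `f` by at least `η δ²`. -/
theorem approx_gradient_step_decrease {n : ℕ}
    (f : EuclideanSpace ℝ (Fin n) → ℝ)
    (hdiff : Differentiable ℝ f)
    (L : ℝ) (hL : 0 < L)
    (hlip : ∀ y z, ‖gradient f y - gradient f z‖ ≤ L * ‖y - z‖)
    (η ζ : ℝ) (hη : 0 < η) (hζ : 0 < ζ)
    (μ : ℝ) (hμ : μ = 2 / (L + 2 * η + 4 * ζ))
    (x ghat : EuclideanSpace ℝ (Fin n)) (δ : ℝ) (hδ : 0 < δ)
    (hacc : ‖ghat - gradient f x‖ ≤ ζ * δ)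
    (hsmall : δ ≤ μ * ‖gradient f x‖) :
    ghat ≠ 0 ∧ η * δ ≤ ‖ghat‖ ∧ f (x - (δ / ‖ghat‖) • ghat) ≤ f x - η * δ ^ 2 := by
  set g := gradient f x
  have hg : (L + 2 * η + 4 * ζ) * δ ≤ 2 * ‖g‖ := by
    rwa [hμ, div_mul_eq_mul_div, le_div_iff₀ (by positivity), mul_comm] at hsmall
  have hghat : (L / 2 + η + ζ) * δ ≤ ‖ghat‖ := by
    linarith [norm_sub_norm_le g ghat, norm_sub_rev g ghat]
  have hηδ : η * δ ≤ ‖ghat‖ := by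
    have : 0 ≤ (L / 2 + ζ) * δ := by positivity
    linarith
  have hghat_pos : 0 < ‖ghat‖ := (mul_pos hη hδ).trans_le hηδ
  refine ⟨norm_pos_iff.mp hghat_pos, hηδ, ?_⟩
  have hstep : ‖(δ / ‖ghat‖) • ghat‖ = δ := by
    rw [norm_smul, Real.norm_of_nonneg (by positivity), div_mul_cancel₀ _ hghat_pos.ne']
  have hinner : δ * ‖ghat‖ - δ * (ζ * δ) ≤ ⟪g, (δ / ‖ghat‖) • ghat⟫ := by
    rw [real_inner_smul_right, div_mul_eq_mul_div, mul_div_assoc, ← mul_sub]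
    gcongr
    exact (sub_le_sub_left hacc _).trans (norm_sub_norm_sub_le_inner_div_norm ghat g)
  have hdescent := le_add_inner_gradient_add_of_gradient_lipschitz hdiff hlip x
    (-((δ / ‖ghat‖) • ghat))
  rw [← sub_eq_add_neg, inner_neg_right, norm_neg, hstep] at hdescent
  linarith [mul_le_mul_of_nonneg_right hghat hδ.le]
end

section
/- Let μ > 0, let {G_k} ⊂ [0,∞) be a sequence of nonnegative reals with G₀ > 0, and let {δ_k} ⊂ (0,∞) be a sequence such that for every k ≥ 0, δ_{k+1} ∈ {2δ_k, δ_k/2}, and δ_{k+1} = 2δ_k whenever δ_k ≤ μ G_k. Set ν = min{δ₀/G₀, μ/2}. Then for every k ≥ 0, δ_k ≥ ν · min{G_ℓ : 0 ≤ ℓ ≤ k}. -/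
/-!
Induction on `k`. A doubling step increases `δ` while the running minimum of `G` can only
decrease. A halving step is taken only when `μ G_k < δ_k`, so then
`δ_{k+1} = δ_k / 2 > (μ / 2) G_k ≥ ν · min_{ℓ ≤ k+1} G_ℓ`.
-/

open Finset

section DoublingHalving

variable {μ ν : ℝ} {G δ : ℕ → ℝ}

theorem mul_lt_of_halved (hδ : ∀ k, 0 < δ k)
    (hdouble : ∀ k, δ k ≤ μ * G k → δ (k + 1) = 2 * δ k) {k : ℕ}
    (hhalf : δ (k + 1) = δ k / 2) : μ * G k < δ k := by
  by_contra! hle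
  linarith [hdouble k hle, hδ k]

theorem mul_inf'_range_le_of_double_or_halve (hν : 0 ≤ ν) (hνμ : ν ≤ μ / 2)
    (hG : ∀ k, 0 ≤ G k) (hδ : ∀ k, 0 < δ k)
    (hupd : ∀ k, δ (k + 1) = 2 * δ k ∨ δ (k + 1) = δ k / 2)
    (hdouble : ∀ k, δ k ≤ μ * G k → δ (k + 1) = 2 * δ k) (h0 : ν * G 0 ≤ δ 0) :
    ∀ k, ν * (range (k + 1)).inf' nonempty_range_add_one G ≤ δ k := by
  intro k
  induction k with
  | zero => simpa using h0
  | succ k ih =>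
    have hmono : (range (k + 2)).inf' nonempty_range_add_one G
        ≤ (range (k + 1)).inf' nonempty_range_add_one G :=
      inf'_mono G (range_subset_range.2 (by omega)) _
    have hle_G : (range (k + 2)).inf' nonempty_range_add_one G ≤ G k :=
      inf'_le G (mem_range.2 (by omega))
    rcases hupd k with hdbl | hhalf
    · calc ν * (range (k + 2)).inf' nonempty_range_add_one G
          ≤ ν * (range (k + 1)).inf' nonempty_range_add_one G :=
            mul_le_mul_of_nonneg_left hmono hν
        _ ≤ δ k := ih
        _ ≤ δ (k + 1) := by rw [hdbl]; linarith [hδ k]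
    · calc ν * (range (k + 2)).inf' nonempty_range_add_one G
          ≤ ν * G k := mul_le_mul_of_nonneg_left hle_G hν
        _ ≤ μ / 2 * G k := mul_le_mul_of_nonneg_right hνμ (hG k)
        _ ≤ δ (k + 1) := by rw [hhalf]; linarith [mul_lt_of_halved hδ hdouble hhalf]

end DoublingHalving

/-- Trust-region-style lower bound: if `δ` is doubled or halved at each step, and is always
doubled when `δ k ≤ μ G k`, then `δ k ≥ ν · min {G ℓ : ℓ ≤ k}` with
`ν = min (δ 0 / G 0) (μ / 2)`. -/
theorem delta_lower_bound (μ : ℝ) (hμ : 0 < μ)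
    (G : ℕ → ℝ) (hG : ∀ k, 0 ≤ G k) (hG0 : 0 < G 0)
    (δ : ℕ → ℝ) (hδ : ∀ k, 0 < δ k)
    (hupd : ∀ k, δ (k + 1) = 2 * δ k ∨ δ (k + 1) = δ k / 2)
    (hdouble : ∀ k, δ k ≤ μ * G k → δ (k + 1) = 2 * δ k) :
    ∀ k, min (δ 0 / G 0) (μ / 2) * (Finset.range (k + 1)).inf' (by simp) G ≤ δ k := by
  have hν : 0 ≤ min (δ 0 / G 0) (μ / 2) :=
    le_min (div_pos (hδ 0) hG0).le (half_pos hμ).le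
  refine mul_inf'_range_le_of_double_or_halve hν (min_le_right _ _) hG hδ hupd hdouble ?_
  calc min (δ 0 / G 0) (μ / 2) * G 0 ≤ δ 0 / G 0 * G 0 :=
        mul_le_mul_of_nonneg_right (min_le_left _ _) (hG 0)
    _ = δ 0 := div_mul_cancel₀ _ hG0.ne'
end

section
/- Derivative-free OptimIST setup: let f : ℝⁿ → ℝ be differentiable with ∇f Lipschitz continuous on ℝⁿ with constant L ∈ (0,∞) and f bounded below; let η > 0, ζ > 0; let {x_k} ⊂ ℝⁿ, {ĝ_k} ⊂ ℝⁿ, {δ_k} ⊂ (0,∞) with f_k = f(x_k), g_k = ∇f(x_k), satisfying for every k ≥ 0: (i) f_{k+1} ≤ f_k; (ii) f_{k+1} ≤ max{f_k − ηδ_k², f(x_k − δ_k ĝ_k/‖ĝ_k‖)}, where ĝ_k/‖ĝ_k‖ is taken to be 0 if ĝ_k = 0; (iii) ‖ĝ_k − g_k‖ ≤ ζδ_k. Set μ = 2/(L + 2η + 4ζ). Then for every k ≥ 0 with δ_k ≤ μ‖g_k‖, one has ‖ĝ_k‖ ≥ ηδ_k and f_{k+1} ≤ f_k − ηδ_k²,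 i.e., k belongs to the set K = {k ∈ ℕ : ‖ĝ_k‖ ≥ ηδ_k and f_{k+1} ≤ f_k − ηδ_k²}. -/
/-!
Along `-ĝ/‖ĝ‖` with step `δ`, the descent lemma for an `L`-smooth `f` gives
`f(x - δ ĝ/‖ĝ‖) ≤ f(x) - δ ⟪∇f x, ĝ⟫/‖ĝ‖ + L δ²/2`, and `‖ĝ - ∇f x‖ ≤ ζ δ` turns the middle
term into at most `-δ (‖∇f x‖ - 2ζδ)`. Once `‖∇f x‖ ≥ δ (L + 2η + 4ζ)/2` the right-hand side is
at most `f(x) - η δ²`, and the safeguard makes `f_{k+1}` no larger than that; the same bound on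
`‖∇f x‖` also keeps `‖ĝ‖ ≥ ‖∇f x‖ - ζδ` above `ηδ`.
-/

open InnerProductSpace

section DescentLemma

variable {E : Type*} [NormedAddCommGroup E] [InnerProductSpace ℝ E]

theorem hasDerivAt_apply_add_smul [CompleteSpace E] {f : E → ℝ} {x v : E} (t : ℝ)
    (hf : DifferentiableAt ℝ f (x + t • v)) :
    HasDerivAt (fun t : ℝ ↦ f (x + t • v)) ⟪gradient f (x + t • v), v⟫_ℝ t := by
  have hline : HasDerivAt (fun t : ℝ ↦ x + t • v) v t := by
    simpa using ((hasDerivAt_id t).smul_const v).const_add x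
  exact (hf.hasGradientAt.hasFDerivAt.comp_hasDerivAt t hline).congr_deriv (by simp)

/-- The descent lemma. -/
theorem apply_add_le_of_lipschitz_gradient [CompleteSpace E] {f : E → ℝ} (hf : Differentiable ℝ f) {L : ℝ}
    (hlip : ∀ y z, ‖gradient f y - gradient f z‖ ≤ L * ‖y - z‖) (x v : E) :
    f (x + v) ≤ f x + ⟪gradient f x, v⟫_ℝ + L / 2 * ‖v‖ ^ 2 := by
  -- `φ` is antitone on `[0, ∞)`, and `φ 1 ≤ φ 0` is the claim.
  set φ : ℝ → ℝ := fun t ↦ f (x + t • v) - t * ⟪gradient f x, v⟫_ℝ - L / 2 * t ^ 2 * ‖v‖ ^ 2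
  have hφ' (t : ℝ) : HasDerivAt φ
      (⟪gradient f (x + t • v) - gradient f x, v⟫_ℝ - L * t * ‖v‖ ^ 2) t := by
    refine (((hasDerivAt_apply_add_smul t (hf _)).sub
      ((hasDerivAt_id t).mul_const ⟪gradient f x, v⟫_ℝ)).sub
      (((hasDerivAt_pow 2 t).const_mul (L / 2)).mul_const (‖v‖ ^ 2))).congr_deriv ?_
    rw [inner_sub_left]
    push_cast
    ring
  have hanti : AntitoneOn φ (Set.Ici 0) := by
    refine antitoneOn_of_hasDerivWithinAt_nonpos (convex_Ici 0)
      (HasDerivAt.continuousOn fun t _ ↦ hφ' t) (fun t _ ↦ (hφ' t).hasDerivWithinAt) ?_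
    intro t ht
    rw [interior_Ici] at ht
    calc ⟪gradient f (x + t • v) - gradient f x, v⟫_ℝ - L * t * ‖v‖ ^ 2
        ≤ ‖gradient f (x + t • v) - gradient f x‖ * ‖v‖ - L * t * ‖v‖ ^ 2 := by
          gcongr; exact real_inner_le_norm _ _
      _ ≤ L * ‖t • v‖ * ‖v‖ - L * t * ‖v‖ ^ 2 := by
          gcongr; simpa using hlip (x + t • v) x
      _ = 0 := by
          rw [norm_smul, Real.norm_of_nonneg ht.le]; ring
  have hφ01 := hanti Set.self_mem_Ici (Set.mem_Ici.mpr zero_le_one) zero_le_one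
  simp only [φ, zero_smul, one_smul, add_zero] at hφ01
  linarith

theorem norm_sub_two_mul_norm_sub_le_inner_div_norm (g h : E) :
    ‖g‖ - 2 * ‖h - g‖ ≤ ⟪g, h⟫_ℝ / ‖h‖ := by
  rcases eq_or_ne h 0 with rfl | hh
  · simp only [zero_sub, norm_neg, inner_zero_right, norm_zero, div_zero]
    linarith [norm_nonneg g]
  have hpos : 0 < ‖h‖ := norm_pos_iff.mpr hh
  have hinner : ‖h‖ * (‖h‖ - ‖h - g‖) ≤ ⟪g, h⟫_ℝ := by
    have hdecomp : ⟪g, h⟫_ℝ = ‖h‖ ^ 2 - ⟪h - g, h⟫_ℝ := by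
      rw [inner_sub_left, real_inner_self_eq_norm_sq]; ring
    nlinarith [real_inner_le_norm (h - g) h]
  have hrev : ‖g‖ - ‖h‖ ≤ ‖h - g‖ := by
    simpa only [norm_sub_rev g h] using norm_sub_norm_le g h
  rw [le_div_iff₀ hpos]
  nlinarith

theorem apply_sub_div_norm_smul_le [CompleteSpace E] {f : E → ℝ} (hf : Differentiable ℝ f) {L : ℝ}
    (hlip : ∀ y z, ‖gradient f y - gradient f z‖ ≤ L * ‖y - z‖) (x : E) {h : E} (hh : h ≠ 0)
    {d : ℝ} (hd : 0 ≤ d) :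
    f (x - (d / ‖h‖) • h) ≤
      f x - d * (‖gradient f x‖ - 2 * ‖h - gradient f x‖) + L / 2 * d ^ 2 := by
  have hpos : 0 < ‖h‖ := norm_pos_iff.mpr hh
  have hstep_norm : ‖-((d / ‖h‖) • h)‖ = d := by
    rw [norm_neg, norm_smul, Real.norm_of_nonneg (by positivity), div_mul_cancel₀ _ hpos.ne']
  have hstep_inner : ⟪gradient f x, -((d / ‖h‖) • h)⟫_ℝ = -(d * (⟪gradient f x, h⟫_ℝ / ‖h‖)) := by
    rw [inner_neg_right, real_inner_smul_right, div_mul_eq_mul_div, mul_div_assoc]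
  have hdescent := apply_add_le_of_lipschitz_gradient hf hlip x (-((d / ‖h‖) • h))
  rw [← sub_eq_add_neg, hstep_norm, hstep_inner] at hdescent
  have := mul_le_mul_of_nonneg_left
    (norm_sub_two_mul_norm_sub_le_inner_div_norm (gradient f x) h) hd
  linarith

end DescentLemma

theorem small_delta_implies_successful_general {n : ℕ}
    (f : EuclideanSpace ℝ (Fin n) → ℝ)
    (hdiff : Differentiable ℝ f)
    (L : ℝ) (hL : 0 < L)
    (hlip : ∀ y z, ‖gradient f y - gradient f z‖ ≤ L * ‖y - z‖)
    (η ζ : ℝ) (hη : 0 < η) (hζ : 0 < ζ)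
    (x ghat : ℕ → EuclideanSpace ℝ (Fin n)) (δ : ℕ → ℝ) (hδ : ∀ k, 0 < δ k)
    (hsd : ∀ k, f (x (k + 1)) ≤
      max (f (x k) - η * δ k ^ 2) (f (x k - (δ k / ‖ghat k‖) • ghat k)))
    (hacc : ∀ k, ‖ghat k - gradient f (x k)‖ ≤ ζ * δ k)
    (μ : ℝ) (hμ : μ = 2 / (L + 2 * η + 4 * ζ)) :
    ∀ k, δ k ≤ μ * ‖gradient f (x k)‖ →
      η * δ k ≤ ‖ghat k‖ ∧ f (x (k + 1)) ≤ f (x k) - η * δ k ^ 2 := by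
  intro k hk
  have hd := hδ k
  have hacc_k := hacc k
  have hgrad : δ k * (L + 2 * η + 4 * ζ) ≤ 2 * ‖gradient f (x k)‖ := by
    rwa [hμ, div_mul_eq_mul_div, le_div_iff₀ (by positivity)] at hk
  have hghat : η * δ k ≤ ‖ghat k‖ := by
    have := norm_sub_norm_le (gradient f (x k)) (ghat k)
    rw [norm_sub_rev] at this
    nlinarith
  refine ⟨hghat, (hsd k).trans (max_le le_rfl ?_)⟩
  have hghat_ne : ghat k ≠ 0 := norm_pos_iff.mp (lt_of_lt_of_le (by positivity) hghat)
  calc f (x k - (δ k / ‖ghat k‖) • ghat k)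
      ≤ f (x k) - δ k * (‖gradient f (x k)‖ - 2 * ‖ghat k - gradient f (x k)‖)
          + L / 2 * δ k ^ 2 := apply_sub_div_norm_smul_le hdiff hlip (x k) hghat_ne hd.le
    _ ≤ f (x k) - η * δ k ^ 2 := by nlinarith

/-- In the derivative-free OptimIST framework, whenever `δ k ≤ μ ‖∇f (x k)‖` with
`μ = 2/(L + 2η + 4ζ)`, iteration `k` is successful: `‖ghat k‖ ≥ η δ k` and
`f (x (k+1)) ≤ f (x k) - η δ k ^ 2`. -/
theorem small_delta_implies_successful {n : ℕ}
    (f : EuclideanSpace ℝ (Fin n) → ℝ)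
    (hdiff : Differentiable ℝ f)
    (L : ℝ) (hL : 0 < L)
    (hlip : ∀ y z, ‖gradient f y - gradient f z‖ ≤ L * ‖y - z‖)
    (hbdd : BddBelow (Set.range f))
    (η ζ : ℝ) (hη : 0 < η) (hζ : 0 < ζ)
    (x ghat : ℕ → EuclideanSpace ℝ (Fin n)) (δ : ℕ → ℝ) (hδ : ∀ k, 0 < δ k)
    (hmono : ∀ k, f (x (k + 1)) ≤ f (x k))
    (hsd : ∀ k, f (x (k + 1)) ≤
      max (f (x k) - η * δ k ^ 2) (f (x k - (δ k / ‖ghat k‖) • ghat k)))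
    (hacc : ∀ k, ‖ghat k - gradient f (x k)‖ ≤ ζ * δ k)
    (μ : ℝ) (hμ : μ = 2 / (L + 2 * η + 4 * ζ)) :
    ∀ k, δ k ≤ μ * ‖gradient f (x k)‖ →
      η * δ k ≤ ‖ghat k‖ ∧ f (x (k + 1)) ≤ f (x k) - η * δ k ^ 2 :=
  small_delta_implies_successful_general f hdiff L hL hlip η ζ hη hζ x ghat δ hδ hsd hacc μ hμ
end

section
/- Let f : ℝⁿ → ℝ be bounded below with f_* = inf f, let η > 0, let {x_k} ⊂ ℝⁿ with f_k = f(x_k) satisfy f_{k+1} ≤ f_k for every k ≥ 0, and let {δ_k} ⊂ (0,∞) satisfy: δ_{k+1} = 2δ_k if k ∈ K and δ_{k+1} = δ_k/2 if k ∉ K, where K ⊆ ℕ is a set of indices such that f_{k+1} ≤ f_k − ηδ_k² for every k ∈ K. Then δ_k → 0 as k → ∞. -/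
/-!
Each step in `K` lowers `f (x k)` by at least `η δ_k ^ 2`, the other steps do not raise it,
and `f` is bounded below; so `∑_{k ∈ K} δ_k ^ 2` converges and `δ_k → 0` along `K`. Once
`|δ_k| < ε / 4` on `K`, a doubling step lands below `ε / 2` while halving steps shrink `|δ|`
geometrically, so `|δ_k|` eventually stays below `ε`.
-/

open Filter Topology Finset

theorem summable_of_bddBelow_of_le_sub {a c : ℕ → ℝ} (ha : BddBelow (Set.range a))
    (hc : ∀ k, 0 ≤ c k) (hstep : ∀ k, a (k + 1) ≤ a k - c k) : Summable c := by
  obtain ⟨B, hB⟩ := ha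
  refine summable_of_sum_range_le (c := a 0 - B) hc fun m => ?_
  calc ∑ k ∈ range m, c k ≤ ∑ k ∈ range m, (a k - a (k + 1)) :=
        sum_le_sum fun k _ => by linarith [hstep k]
    _ = a 0 - a m := sum_range_sub' a m
    _ ≤ a 0 - B := by linarith [hB ⟨m, rfl⟩]

theorem le_max_div_two_pow {u : ℕ → ℝ} {c : ℝ} (hc : 0 ≤ c)
    (hstep : ∀ k, u (k + 1) ≤ max (u k / 2) c) (k : ℕ) : u k ≤ max (u 0 / 2 ^ k) c := by
  induction k with
  | zero => simp
  | succ k ih =>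
    calc u (k + 1) ≤ max (u k / 2) c := hstep k
      _ ≤ max (max (u 0 / 2 ^ k) c / 2) c := by gcongr
      _ ≤ max (u 0 / 2 ^ (k + 1)) c := by
        rw [← max_div_div_right zero_le_two, div_div, ← pow_succ]
        exact max_le (max_le_max le_rfl (by linarith)) (le_max_right _ _)

theorem tendsto_zero_of_double_on_halve_off {u : ℕ → ℝ} {K : Set ℕ} (hu : ∀ k, 0 ≤ u k)
    (hdouble : ∀ k ∈ K, u (k + 1) ≤ 2 * u k) (hhalve : ∀ k ∉ K, u (k + 1) ≤ u k / 2)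
    (hK : ∀ ε > 0, ∀ᶠ k in atTop, k ∈ K → u k < ε) : Tendsto u atTop (𝓝 0) := by
  refine tendsto_order.2 ⟨fun a ha => .of_forall fun k => ha.trans_le (hu k), fun ε hε => ?_⟩
  obtain ⟨N, hN⟩ := eventually_atTop.1 (hK (ε / 4) (by positivity))
  have hstep : ∀ j, u (j + 1 + N) ≤ max (u (j + N) / 2) (ε / 2) := fun j => by
    rw [add_right_comm]
    by_cases hj : j + N ∈ K
    · exact le_max_of_le_right (by linarith [hdouble _ hj, hN (j + N) (by omega) hj])
    · exact le_max_of_le_left (hhalve _ hj)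
  have hgeom : Tendsto (fun j : ℕ => u N / 2 ^ j) atTop (𝓝 0) :=
    tendsto_const_nhds.div_atTop (tendsto_pow_atTop_atTop_of_one_lt one_lt_two)
  have hshift : ∀ᶠ j in atTop, u (j + N) < ε := by
    filter_upwards [hgeom.eventually (gt_mem_nhds hε)] with j hj
    refine (le_max_div_two_pow (u := fun j => u (j + N)) (c := ε / 2) (by positivity) hstep j
      |>.trans_lt ?_)
    simpa using max_lt hj (half_lt_self hε)
  rw [← map_add_atTop_eq_nat N]
  exact hshift

theorem delta_tendsto_zero_general {n : ℕ}
    (f : EuclideanSpace ℝ (Fin n) → ℝ)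
    (hbdd : BddBelow (Set.range f))
    (η : ℝ) (hη : 0 < η)
    (x : ℕ → EuclideanSpace ℝ (Fin n))
    (hmono : ∀ k, f (x (k + 1)) ≤ f (x k))
    (δ : ℕ → ℝ)
    (K : Set ℕ)
    (hdec : ∀ k ∈ K, f (x (k + 1)) ≤ f (x k) - η * δ k ^ 2)
    (hupd : ∀ k, (k ∈ K → δ (k + 1) = 2 * δ k) ∧ (k ∉ K → δ (k + 1) = δ k / 2)) :
    Tendsto δ atTop (𝓝 0) := by
  have hsummable : Summable (K.indicator fun k => η * δ k ^ 2) := by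
    refine summable_of_bddBelow_of_le_sub (a := f ∘ x)
      (hbdd.mono (Set.range_comp_subset_range x f))
      (Set.indicator_nonneg fun k _ => by positivity) fun k => ?_
    by_cases hk : k ∈ K
    · simpa [Set.indicator_of_mem hk] using hdec k hk
    · simpa [Set.indicator_of_notMem hk] using hmono k
  have hsmall_on_K : ∀ ε > 0, ∀ᶠ k in atTop, k ∈ K → |δ k| < ε := fun ε hε => by
    have hηε : 0 < η * ε ^ 2 := by positivity
    filter_upwards [hsummable.tendsto_atTop_zero.eventually (gt_mem_nhds hηε)] with k hk hkK
    rw [Set.indicator_of_mem hkK] at hk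
    exact abs_lt_of_sq_lt_sq (lt_of_mul_lt_mul_left hk hη.le) hε.le
  refine tendsto_zero_iff_abs_tendsto_zero _ |>.2 <|
    tendsto_zero_of_double_on_halve_off (u := fun k => |δ k|) (fun k => abs_nonneg _)
      (fun k hk => ?_) (fun k hk => ?_) hsmall_on_K
  · rw [(hupd k).1 hk, abs_mul, abs_two]
  · rw [(hupd k).2 hk, abs_div, abs_two]

/-- The trust parameters of the derivative-free OptimIST framework tend to zero: `δ` is doubled
exactly on a set `K` of iterations where `f` decreases by at least `η δ k ^ 2`, and halved
elsewhere; then `δ k → 0`. -/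
theorem delta_tendsto_zero {n : ℕ}
    (f : EuclideanSpace ℝ (Fin n) → ℝ)
    (hbdd : BddBelow (Set.range f))
    (η : ℝ) (hη : 0 < η)
    (x : ℕ → EuclideanSpace ℝ (Fin n))
    (hmono : ∀ k, f (x (k + 1)) ≤ f (x k))
    (δ : ℕ → ℝ) (hδ : ∀ k, 0 < δ k)
    (K : Set ℕ)
    (hdec : ∀ k ∈ K, f (x (k + 1)) ≤ f (x k) - η * δ k ^ 2)
    (hupd : ∀ k, (k ∈ K → δ (k + 1) = 2 * δ k) ∧ (k ∉ K → δ (k + 1) = δ k / 2)) :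
    Tendsto δ atTop (𝓝 0) :=
  delta_tendsto_zero_general f hbdd η hη x hmono δ K hdec hupd
end

section
/- Derivative-free OptimIST setup: let f : ℝⁿ → ℝ be differentiable with ∇f Lipschitz continuous on ℝⁿ with constant L ∈ (0,∞) and f bounded below with f_* = inf f; let η > 0, ζ > 0; let {x_k} ⊂ ℝⁿ, {ĝ_k} ⊂ ℝⁿ, {δ_k} ⊂ (0,∞) with f_k = f(x_k), g_k = ∇f(x_k), satisfying for every k ≥ 0: (i) f_{k+1} ≤ f_k; (ii) f_{k+1} ≤ max{f_k − ηδ_k², f(x_k − δ_k ĝ_k/‖ĝ_k‖)}, where ĝ_k/‖ĝ_k‖ is taken to be 0 if ĝ_k = 0; (iii) ‖ĝ_k − g_k‖ ≤ ζδ_k; (iv) δ_{k+1} = 2δ_k if both ‖ĝ_k‖ ≥ ηδ_k and f_{k+1} ≤ f_k − ηδ_k², and δ_{k+1} = δ_k/2 otherwise. Set μ = 2/(L + 2η + 4ζ) and, assuming g₀ ≠ 0, ν = min{δ₀/‖g₀‖, μ/2}. Then for every ε with 0 < ε ≤ ‖g₀‖, there exists an index k with ‖∇f(x_k)‖ ≤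 ε and k ≤ 2(f(x₀) − f_*)/(η ν² ε²) + log₂(δ₀/(ν ε)) + 1. -/
/-!
By the descent lemma for an `L`-smooth `f`, a trial step of length `δ` along an estimate `ĝ` with
`‖ĝ - ∇f x‖ ≤ ζ δ` decreases `f` by at least `η δ²` as soon as `δ ≤ μ ‖∇f x‖`; such an iteration
is successful and doubles `δ`. Hence, while `‖∇f x_j‖ > ε`, the step size never drops below `ν ε`,
and each of the `S_k` successful iterations among the first `k` decreases `f` by at least
`η (ν ε)²`, so `S_k ≤ (f x₀ - f_*) / (η (ν ε)²)`. Since `δ` is doubled on successes and halved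
otherwise, `δ_k 2^k = δ₀ 4^{S_k}`, and `ν ε ≤ δ_k` then gives `k ≤ 2 S_k + log₂ (δ₀ / (ν ε))`.
-/

section Descent

variable {E : Type*} [NormedAddCommGroup E] [InnerProductSpace ℝ E] [CompleteSpace E]
  {f : E → ℝ} {L : ℝ}

theorem le_add_inner_gradient_add_of_lipschitz_gradient (hf : Differentiable ℝ f)
    (hlip : ∀ y z, ‖gradient f y - gradient f z‖ ≤ L * ‖y - z‖) (p w : E) :
    f (p + w) ≤ f p + inner ℝ (gradient f p) w + L / 2 * ‖w‖ ^ 2 := by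
  set c := inner ℝ (gradient f p) w
  set K := L / 2 * ‖w‖ ^ 2
  set ψ : ℝ → ℝ := fun t => f (p + t • w) - t * c - t ^ 2 * K with hψ_def
  have hψ (t : ℝ) : HasDerivAt ψ (inner ℝ (gradient f (p + t • w)) w - c - 2 * t * K) t := by
    have hline : HasDerivAt (fun t : ℝ => p + t • w) w t := by
      simpa using ((hasDerivAt_id t).smul_const w).const_add p
    have hf' := (hf (p + t • w)).hasGradientAt.hasFDerivAt.comp_hasDerivAt t hline
    simp only [InnerProductSpace.toDual_apply_apply] at hf'
    have hlin : HasDerivAt (fun t : ℝ => t * c) c t := by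
      simpa using (hasDerivAt_id t).mul_const c
    have hsq : HasDerivAt (fun t : ℝ => t ^ 2 * K) (2 * t * K) t := by
      simpa using (hasDerivAt_pow 2 t).mul_const K
    exact (hf'.sub hlin).sub hsq
  have hanti : AntitoneOn ψ (Set.Icc 0 1) := by
    refine antitoneOn_of_deriv_nonpos (convex_Icc 0 1)
      (fun t _ => (hψ t).continuousAt.continuousWithinAt)
      (fun t _ => (hψ t).differentiableAt.differentiableWithinAt) fun t ht => ?_
    rw [interior_Icc] at ht
    have hgrad : ‖gradient f (p + t • w) - gradient f p‖ ≤ L * (t * ‖w‖) := by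
      simpa [norm_smul, abs_of_pos ht.1] using hlip (p + t • w) p
    calc deriv ψ t
        = inner ℝ (gradient f (p + t • w) - gradient f p) w - L * (t * ‖w‖) * ‖w‖ := by
          rw [(hψ t).deriv, inner_sub_left]; ring
      _ ≤ ‖gradient f (p + t • w) - gradient f p‖ * ‖w‖ - L * (t * ‖w‖) * ‖w‖ := by
          gcongr; exact real_inner_le_norm _ _
      _ ≤ 0 := by nlinarith [norm_nonneg w]
  have h01 := hanti (Set.left_mem_Icc.2 zero_le_one) (Set.right_mem_Icc.2 zero_le_one) zero_le_one
  simp only [hψ_def] at h01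
  norm_num at h01
  linarith

theorem descent_of_inexact_gradient_step (hf : Differentiable ℝ f)
    (hlip : ∀ y z, ‖gradient f y - gradient f z‖ ≤ L * ‖y - z‖) (hL : 0 ≤ L)
    {η ζ d : ℝ} (hη : 0 < η) (hd : 0 < d) {p G : E} (hG : ‖G - gradient f p‖ ≤ ζ * d)
    (hstep : d * (L + 2 * η + 4 * ζ) ≤ 2 * ‖gradient f p‖) :
    η * d ≤ ‖G‖ ∧ f (p - (d / ‖G‖) • G) ≤ f p - η * d ^ 2 := by
  set g := gradient f p
  have hζd : 0 ≤ ζ * d := (norm_nonneg _).trans hG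
  have hGg : ‖g‖ - ζ * d ≤ ‖G‖ := by
    linarith [norm_sub_norm_le g G, norm_sub_rev g G]
  have hηG : η * d ≤ ‖G‖ := by linarith [mul_nonneg hd.le hL]
  have hG0 : 0 < ‖G‖ := lt_of_lt_of_le (by positivity) hηG
  have hinner : ‖G‖ ^ 2 - ζ * d * ‖G‖ ≤ inner ℝ g G := by
    have h := real_inner_le_norm (G - g) G
    rw [inner_sub_left, real_inner_self_eq_norm_sq] at h
    linarith [mul_le_mul_of_nonneg_right hG (norm_nonneg G)]
  have hw : ‖-((d / ‖G‖) • G)‖ = d := by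
    rw [norm_neg, norm_smul, Real.norm_of_nonneg (by positivity), div_mul_cancel₀ _ hG0.ne']
  have hgw : inner ℝ g (-((d / ‖G‖) • G)) ≤ -(d * ‖G‖) + ζ * d ^ 2 := by
    rw [inner_neg_right, real_inner_smul_right]
    have := mul_le_mul_of_nonneg_left hinner (div_pos hd hG0).le
    have heq : d / ‖G‖ * (‖G‖ ^ 2 - ζ * d * ‖G‖) = d * ‖G‖ - ζ * d ^ 2 := by
      field_simp
    linarith
  refine ⟨hηG, ?_⟩
  have h := le_add_inner_gradient_add_of_lipschitz_gradient hf hlip p (-((d / ‖G‖) • G))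
  rw [← sub_eq_add_neg, hw] at h
  linarith [mul_le_mul_of_nonneg_left hGg hd.le, mul_le_mul_of_nonneg_left hstep hd.le]

end Descent

theorem le_sub_count_mul {u : ℕ → ℝ} {s : ℕ → Prop} [DecidablePred s] {m : ℝ} {k : ℕ}
    (hmono : ∀ j < k, u (j + 1) ≤ u j) (hsucc : ∀ j < k, s j → u (j + 1) ≤ u j - m) :
    u k ≤ u 0 - Nat.count s k * m := by
  induction k with
  | zero => simp
  | succ k ih =>
    have hk := ih (fun j hj => hmono j (hj.trans k.lt_succ_self))
      (fun j hj => hsucc j (hj.trans k.lt_succ_self))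
    rw [Nat.count_succ]
    split_ifs with h
    · push_cast; linarith [hsucc k k.lt_succ_self h]
    · push_cast; linarith [hmono k k.lt_succ_self]

section StepSize

variable {δ : ℕ → ℝ} {s : ℕ → Prop} [DecidablePred s]

theorem mul_two_pow_eq_mul_four_pow_count
    (hupd : ∀ k, δ (k + 1) = if s k then 2 * δ k else δ k / 2) (k : ℕ) :
    δ k * 2 ^ k = δ 0 * 4 ^ Nat.count s k := by
  induction k with
  | zero => simp
  | succ k ih =>
    rw [hupd, Nat.count_succ, pow_succ, pow_add]
    split_ifs
    · linear_combination 4 * ih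
    · linear_combination ih

theorem le_two_mul_count_add_logb
    (hupd : ∀ k, δ (k + 1) = if s k then 2 * δ k else δ k / 2) (hδ0 : 0 < δ 0)
    {c : ℝ} (hc : 0 < c) {k : ℕ} (hk : c ≤ δ k) :
    (k : ℝ) ≤ 2 * Nat.count s k + Real.logb 2 (δ 0 / c) := by
  have h : (2 : ℝ) ^ k ≤ δ 0 / c * 4 ^ Nat.count s k := by
    rw [div_mul_eq_mul_div, le_div_iff₀ hc, ← mul_two_pow_eq_mul_four_pow_count hupd, mul_comm]
    gcongr
  have hlog := Real.logb_le_logb_of_le (b := 2) one_lt_two (by positivity) h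
  rw [Real.logb_mul (by positivity) (by positivity), show (4 : ℝ) = 2 ^ 2 by norm_num,
    ← pow_mul, Real.logb_pow, Real.logb_pow, Real.logb_self_eq_one one_lt_two] at hlog
  push_cast at hlog
  linarith

theorem le_step_size_of_two_mul_le {r : ℕ → ℝ}
    (hupd : ∀ k, δ (k + 1) = if s k then 2 * δ k else δ k / 2)
    (hsucc : ∀ k, δ k ≤ r k → s k) {c : ℝ} (hc : 0 ≤ c) (h0 : c ≤ δ 0)
    (k : ℕ) (hr : ∀ j < k, 2 * c ≤ r j) : c ≤ δ k := by
  induction k with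
  | zero => exact h0
  | succ k ih =>
    have hk := ih fun j hj => hr j (hj.trans k.lt_succ_self)
    rw [hupd]
    by_cases hδr : δ k ≤ r k
    · rw [if_pos (hsucc k hδr)]; linarith
    · split_ifs <;> linarith [hr k k.lt_succ_self]

theorem le_two_mul_div_add_logb
    (hupd : ∀ k, δ (k + 1) = if s k then 2 * δ k else δ k / 2) (hδ0 : 0 < δ 0)
    {u : ℕ → ℝ} {η c b : ℝ} (hη : 0 < η) (hc : 0 < c) {k : ℕ} (hb : b ≤ u k)
    (hmono : ∀ j < k, u (j + 1) ≤ u j) (hsucc : ∀ j < k, s j → u (j + 1) ≤ u j - η * δ j ^ 2)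
    (hδ : ∀ j ≤ k, c ≤ δ j) :
    (k : ℝ) ≤ 2 * (u 0 - b) / (η * c ^ 2) + Real.logb 2 (δ 0 / c) := by
  have hu := le_sub_count_mul (m := η * c ^ 2) hmono fun j hj hs =>
    (hsucc j hj hs).trans (by gcongr; exact hδ j hj.le)
  have hcount : (Nat.count s k : ℝ) ≤ (u 0 - b) / (η * c ^ 2) := by
    rw [le_div_iff₀ (by positivity)]
    linarith
  have hk := le_two_mul_count_add_logb hupd hδ0 hc (hδ k le_rfl)
  rw [mul_div_assoc]
  linarith

end StepSize

theorem exists_le_and_le_of_forall_lt {a : ℕ → ℝ} {ε B : ℝ}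
    (h : ∀ k, (∀ j < k, ε < a j) → (k : ℝ) ≤ B) : ∃ k, a k ≤ ε ∧ (k : ℝ) ≤ B := by
  classical
  have hex : ∃ k, a k ≤ ε := by
    by_contra! hlarge
    have := h (⌈B⌉₊ + 1) fun j _ => hlarge j
    push_cast at this
    linarith [Nat.le_ceil B]
  refine ⟨Nat.find hex, Nat.find_spec hex, h _ fun j hj => ?_⟩
  exact lt_of_not_ge (Nat.find_min hex hj)

theorem optimist_complexity_nonconvex_general {n : ℕ}
    (f : EuclideanSpace ℝ (Fin n) → ℝ)
    (hdiff : Differentiable ℝ f)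
    (L : ℝ) (hL : 0 < L)
    (hlip : ∀ y z, ‖gradient f y - gradient f z‖ ≤ L * ‖y - z‖)
    (hbdd : BddBelow (Set.range f))
    (η ζ : ℝ) (hη : 0 < η) (hζ : 0 < ζ)
    (x ghat : ℕ → EuclideanSpace ℝ (Fin n)) (δ : ℕ → ℝ) (hδ : ∀ k, 0 < δ k)
    (hmono : ∀ k, f (x (k + 1)) ≤ f (x k))
    (hsd : ∀ k, f (x (k + 1)) ≤
      max (f (x k) - η * δ k ^ 2) (f (x k - (δ k / ‖ghat k‖) • ghat k)))
    (hacc : ∀ k, ‖ghat k - gradient f (x k)‖ ≤ ζ * δ k)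
    (hupd : ∀ k,
      ((η * δ k ≤ ‖ghat k‖ ∧ f (x (k + 1)) ≤ f (x k) - η * δ k ^ 2) → δ (k + 1) = 2 * δ k) ∧
      (¬(η * δ k ≤ ‖ghat k‖ ∧ f (x (k + 1)) ≤ f (x k) - η * δ k ^ 2) → δ (k + 1) = δ k / 2))
    (μ ν : ℝ) (hμ : μ = 2 / (L + 2 * η + 4 * ζ))
    (hν : ν = min (δ 0 / ‖gradient f (x 0)‖) (μ / 2)) :
    ∀ ε : ℝ, 0 < ε → ε ≤ ‖gradient f (x 0)‖ →
      ∃ k : ℕ, ‖gradient f (x k)‖ ≤ ε ∧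
        (k : ℝ) ≤ 2 * (f (x 0) - ⨅ y, f y) / (η * ν ^ 2 * ε ^ 2) +
          Real.logb 2 (δ 0 / (ν * ε)) + 1 := by
  classical
  intro ε hε hεg
  set s : ℕ → Prop := fun k => η * δ k ≤ ‖ghat k‖ ∧ f (x (k + 1)) ≤ f (x k) - η * δ k ^ 2
  have hupd' (k : ℕ) : δ (k + 1) = if s k then 2 * δ k else δ k / 2 := by
    split_ifs with h
    exacts [(hupd k).1 h, (hupd k).2 h]
  have hμ0 : 0 < μ := hμ ▸ by positivity
  have hg0 : 0 < ‖gradient f (x 0)‖ := hε.trans_le hεg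
  have hνμ : ν ≤ μ / 2 := hν ▸ min_le_right _ _
  have hν0 : 0 < ν := hν ▸ lt_min (div_pos (hδ 0) hg0) (half_pos hμ0)
  have hνε : 0 < ν * ε := mul_pos hν0 hε
  have hνεδ0 : ν * ε ≤ δ 0 :=
    (mul_le_mul_of_nonneg_left hεg hν0.le).trans ((le_div_iff₀ hg0).1 (hν ▸ min_le_left _ _))
  have hsucc (k : ℕ) (hk : δ k ≤ μ * ‖gradient f (x k)‖) : s k := by
    have hstep : δ k * (L + 2 * η + 4 * ζ) ≤ 2 * ‖gradient f (x k)‖ := by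
      rw [hμ, div_mul_eq_mul_div, le_div_iff₀ (by positivity)] at hk
      linarith
    obtain ⟨hηG, htrial⟩ :=
      descent_of_inexact_gradient_step hdiff hlip hL.le hη (hδ k) (hacc k) hstep
    exact ⟨hηG, (hsd k).trans (max_le le_rfl htrial)⟩
  suffices h : ∀ k : ℕ, (∀ j < k, ε < ‖gradient f (x j)‖) → (k : ℝ) ≤
      2 * (f (x 0) - ⨅ y, f y) / (η * ν ^ 2 * ε ^ 2) + Real.logb 2 (δ 0 / (ν * ε)) by
    obtain ⟨k, hk, hkB⟩ := exists_le_and_le_of_forall_lt h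
    exact ⟨k, hk, by linarith⟩
  intro k hlarge
  have hδ_ge : ∀ j ≤ k, ν * ε ≤ δ j := fun j hj =>
    le_step_size_of_two_mul_le hupd' hsucc hνε.le hνεδ0 j fun i hi => by
      linarith [mul_le_mul_of_nonneg_right hνμ hε.le,
        mul_le_mul_of_nonneg_left (hlarge i (hi.trans_le hj)).le hμ0.le]
  have hk := le_two_mul_div_add_logb (u := fun j => f (x j)) hupd' (hδ 0) hη hνε
    (ciInf_le hbdd (x k)) (fun j _ => hmono j) (fun j _ hs => hs.2) hδ_ge
  rwa [show η * ν ^ 2 * ε ^ 2 = η * (ν * ε) ^ 2 by ring]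

/-- Worst-case complexity of the derivative-free OptimIST framework in the nonconvex case:
for every `0 < ε ≤ ‖∇f (x 0)‖` there is an index
`k ≤ 2 (f (x 0) - f_*)/(η ν² ε²) + log₂ (δ 0/(ν ε)) + 1` with `‖∇f (x k)‖ ≤ ε`,
where `ν = min (δ 0 / ‖∇f (x 0)‖) (μ / 2)` and `μ = 2/(L + 2η + 4ζ)`. -/
theorem optimist_complexity_nonconvex {n : ℕ}
    (f : EuclideanSpace ℝ (Fin n) → ℝ)
    (hdiff : Differentiable ℝ f)
    (L : ℝ) (hL : 0 < L)
    (hlip : ∀ y z, ‖gradient f y - gradient f z‖ ≤ L * ‖y - z‖)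
    (hbdd : BddBelow (Set.range f))
    (η ζ : ℝ) (hη : 0 < η) (hζ : 0 < ζ)
    (x ghat : ℕ → EuclideanSpace ℝ (Fin n)) (δ : ℕ → ℝ) (hδ : ∀ k, 0 < δ k)
    (hmono : ∀ k, f (x (k + 1)) ≤ f (x k))
    (hsd : ∀ k, f (x (k + 1)) ≤
      max (f (x k) - η * δ k ^ 2) (f (x k - (δ k / ‖ghat k‖) • ghat k)))
    (hacc : ∀ k, ‖ghat k - gradient f (x k)‖ ≤ ζ * δ k)
    (hupd : ∀ k,
      ((η * δ k ≤ ‖ghat k‖ ∧ f (x (k + 1)) ≤ f (x k) - η * δ k ^ 2) → δ (k + 1) = 2 * δ k) ∧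
      (¬(η * δ k ≤ ‖ghat k‖ ∧ f (x (k + 1)) ≤ f (x k) - η * δ k ^ 2) → δ (k + 1) = δ k / 2))
    (μ ν : ℝ) (hμ : μ = 2 / (L + 2 * η + 4 * ζ))
    (hg0 : gradient f (x 0) ≠ 0)
    (hν : ν = min (δ 0 / ‖gradient f (x 0)‖) (μ / 2)) :
    ∀ ε : ℝ, 0 < ε → ε ≤ ‖gradient f (x 0)‖ →
      ∃ k : ℕ, ‖gradient f (x k)‖ ≤ ε ∧
        (k : ℝ) ≤ 2 * (f (x 0) - ⨅ y, f y) / (η * ν ^ 2 * ε ^ 2) +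
          Real.logb 2 (δ 0 / (ν * ε)) + 1 :=
  optimist_complexity_nonconvex_general f hdiff L hL hlip hbdd η ζ hη hζ x ghat δ hδ hmono hsd hacc
    hupd μ ν hμ hν
end
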